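/- Let G be a finite graph, τ a threshold function with τ(u) ∈ {0,1,deg_G(u)} for all u such that no edge joins two vertices whose thresholds equal their degrees. Then a set X ⊆ V(G) is a non-monotone target set for (G,τ) if and only if: (1a) for every non-bipartite component with vertex set U of G[{u : τ(u)=1 or τ(u)=0}] with |U| ≥ 2 and τ ≡ 1 on U, X ∩ N_G[U] ≠ ∅; (1b) for every such bipartite component with partite sets A, B, setting A' = N_G(B)\N_G[A], B' = N_G(A)\N_G[B], C = N_G(A)∩N_G(B), both X ∩ (A∪A'∪C) ≠ ∅ and X ∩ (B∪B'∪C) ≠ ∅; and (2) for every vertex u with τ(u)=1 all of whose neighbours v have τ(v)=deg_G(v), there exist neighbours v₁, v₂ of u with v₁ ∈ X and N_G(v₂) ⊆ X. -/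

import Mathlib

open Finset

/-- The non-monotone activation process on `(G, τ)` starting with `X`:
`X_t = {u : |N_G(u) ∩ X_{t-1}| ≥ τ(u)}` for `t ≥ 1`. -/
def activation {V : Type*} (G : SimpleGraph V) [Fintype V] [DecidableEq V]
    [DecidableRel G.Adj] (τ : V → ℤ) (X : Finset V) : ℕ → Finset V
  | 0 => X
  | t + 1 => Finset.univ.filter
      (fun u => τ u ≤ ((G.neighborFinset u ∩ activation G τ X t).card : ℤ))

/-- `X` is a non-monotone target set for `(G, τ)`. -/
def IsTargetSet {V : Type*} (G : SimpleGraph V) [Fintype V] [DecidableEq V]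
    [DecidableRel G.Adj] (τ : V → ℤ) (X : Finset V) : Prop :=
  ∃ t₀ : ℕ, ∀ t ≥ t₀, activation G τ X t = Finset.univ

/-- Open neighbourhood of a set of vertices: `N_G(S)`. -/
def openNbhd {V : Type*} (G : SimpleGraph V) (S : Set V) : Set V :=
  {v | v ∉ S ∧ ∃ u ∈ S, G.Adj u v}

/-- Closed neighbourhood of a set of vertices: `N_G[S]`. -/
def closedNbhd {V : Type*} (G : SimpleGraph V) (S : Set V) : Set V :=
  S ∪ openNbhd G S

/-- Closed neighbourhood, as a finset. -/
def closedNbhdFinset {V : Type*} (G : SimpleGraph V) [Fintype V] [DecidableEq V]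
    [DecidableRel G.Adj] (U : Finset V) : Finset V :=
  U ∪ Finset.univ.filter (fun v => ∃ u ∈ U, G.Adj u v)

/-- `U` is the vertex set of a connected component of the subgraph of `G` induced by `S`. -/
def IsComponentOf {V : Type*} (G : SimpleGraph V) (S U : Set V) : Prop :=
  U ⊆ S ∧ U.Nonempty ∧ (G.induce U).Connected ∧
    ∀ u ∈ U, ∀ v ∈ S, G.Adj u v → v ∈ U

/-- The subgraph of `G` induced by `S`, as a graph on the subtype `S`. -/
def restrict {V : Type*} (G : SimpleGraph V) (S : Set V) : SimpleGraph S where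
  Adj a b := G.Adj a b
  symm := ⟨fun _ _ h => G.adj_symm h⟩
  loopless := ⟨fun _ h => G.irrefl h⟩

instance {V : Type*} (G : SimpleGraph V) (S : Set V) [h : DecidableRel G.Adj] :
    DecidableRel (restrict G S).Adj := fun a b => h a b

/-! With thresholds in `{0, 1, deg}` and no two adjacent degree-threshold vertices,
`X_{t+1} ⊆ X_{t+3}`: a degree-threshold vertex active at time `s` reactivates all of its
neighbours (which have threshold at most 1) at `s + 1`, hence itself at `s + 2`; and a threshold-1
vertex activated at `t + 1` by a neighbour `v` reactivates `v` at `t + 2` (or `v` does so itself).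
Hence a vertex is eventually always active once it is active at two positive times of opposite
parity.

Inside a component `U` of the threshold-`≤ 1` vertices activity moves one edge per step, so one
activation in `N[U]` reaches every vertex of `U` at times differing by walk lengths. A threshold-0
vertex or an odd closed walk in `U` then gives both parities. If `U` is bipartite with sides
`A, B`, the parity is fixed by the sides, so both `A ∪ A' ∪ C` and `B ∪ B' ∪ C` must be hit; if
the first is missed, `A` is inactive at every even time and `B` at every odd time. A threshold-1
vertex all of whose neighbours have degree thresholds is active at time `t + 2` only if it is at
time `t`, which forces condition (2); degree-threshold vertices follow their neighbours.
-/

open Filter SimpleGraph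

lemma Nat.eventually_atTop_of_succ {P : ℕ → Prop} (h : ∀ᶠ n in atTop, P (n + 1)) :
    ∀ᶠ n in atTop, P n :=
  tendsto_principal.1 ((tendsto_add_atTop_iff_nat (f := id) 1).1 (tendsto_principal.2 h))

lemma Nat.eventually_atTop_of_add_two {P : ℕ → Prop} (h : ∀ n, P n → P (n + 2)) {a b : ℕ}
    (ha : P a) (hb : P b) (hab : Odd (a + b)) : ∀ᶠ n in atTop, P n := by
  have step : ∀ {m}, P m → ∀ k, P (m + 2 * k) := fun hm k => by
    induction k with
    | zero => exact hm
    | succ k ih => exact h _ ih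
  obtain ⟨j, hj⟩ := hab
  refine eventually_atTop.2 ⟨a + b, fun n hn => ?_⟩
  obtain ⟨k, hk⟩ | ⟨k, hk⟩ := Nat.even_or_odd (n - a)
  · rw [show n = a + 2 * k by omega]; exact step ha k
  · rw [show n = b + 2 * (k + 1 + j - b) by omega]; exact step hb _

section Activation

variable {V : Type*} [Fintype V] [DecidableEq V] {G : SimpleGraph V} [DecidableRel G.Adj]
  {τ : V → ℤ} {X : Finset V} {u v : V} {t : ℕ}

lemma mem_activation_succ :
    u ∈ activation G τ X (t + 1) ↔ τ u ≤ (#(G.neighborFinset u ∩ activation G τ X t) : ℤ) := by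
  simp [activation]

lemma mem_activation_succ_of_tau_eq_zero (hu : τ u = 0) : u ∈ activation G τ X (t + 1) := by
  simp [mem_activation_succ, hu]

lemma mem_activation_succ_iff_of_tau_eq_one (hu : τ u = 1) :
    u ∈ activation G τ X (t + 1) ↔ ∃ v, G.Adj u v ∧ v ∈ activation G τ X t := by
  simp [mem_activation_succ, hu, Finset.Nonempty]

lemma mem_activation_succ_iff_of_tau_eq_degree (hu : τ u = G.degree u) :
    u ∈ activation G τ X (t + 1) ↔ G.neighborFinset u ⊆ activation G τ X t := by
  rw [mem_activation_succ, hu, Nat.cast_le, ← card_neighborFinset_eq_degree, ← inter_eq_left]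
  exact ⟨eq_of_subset_of_card_le inter_subset_left, fun h => by rw [h]⟩

lemma mem_activation_succ_of_adj (hu : τ u = 0 ∨ τ u = 1) (huv : G.Adj u v)
    (hv : v ∈ activation G τ X t) : u ∈ activation G τ X (t + 1) :=
  hu.elim mem_activation_succ_of_tau_eq_zero
    fun hu => (mem_activation_succ_iff_of_tau_eq_one hu).2 ⟨v, huv, hv⟩

lemma mem_activation_add_length {S : Set V} (hS : ∀ w ∈ S, τ w = 0 ∨ τ w = 1) {a b : S}
    (p : (G.induce S).Walk a b) (ha : ↑a ∈ activation G τ X t) :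
    ↑b ∈ activation G τ X (t + p.length) := by
  induction p generalizing t with
  | nil => exact ha
  | cons hadj p ih =>
    rw [Walk.length_cons, add_comm p.length, ← add_assoc]
    exact ih (mem_activation_succ_of_adj (hS _ (Subtype.prop _)) hadj.symm ha)

lemma eventually_mem_activation_of_tau_eq_zero (hu : τ u = 0) :
    ∀ᶠ t in atTop, u ∈ activation G τ X t :=
  Nat.eventually_atTop_of_succ (.of_forall fun _ => mem_activation_succ_of_tau_eq_zero hu)

lemma eventually_mem_activation_of_adj (hu : τ u = 0 ∨ τ u = 1) (huv : G.Adj u v)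
    (hv : ∀ᶠ t in atTop, v ∈ activation G τ X t) : ∀ᶠ t in atTop, u ∈ activation G τ X t :=
  Nat.eventually_atTop_of_succ (hv.mono fun _ => mem_activation_succ_of_adj hu huv)

lemma eventually_mem_activation_of_reachable {S : Set V} (hS : ∀ w ∈ S, τ w = 0 ∨ τ w = 1)
    {a b : S} (hab : (G.induce S).Reachable a b) (ha : ∀ᶠ t in atTop, ↑a ∈ activation G τ X t) :
    ∀ᶠ t in atTop, ↑b ∈ activation G τ X t := by
  obtain ⟨p⟩ := hab
  induction p with
  | nil => exact ha
  | cons hadj p ih =>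
    exact ih (eventually_mem_activation_of_adj (hS _ (Subtype.prop _)) hadj.symm ha)

lemma eventually_mem_activation_of_tau_eq_degree (hu : τ u = G.degree u)
    (h : ∀ v ∈ G.neighborFinset u, ∀ᶠ t in atTop, v ∈ activation G τ X t) :
    ∀ᶠ t in atTop, u ∈ activation G τ X t :=
  Nat.eventually_atTop_of_succ (((eventually_all_finset _).2 h).mono
    fun _ => (mem_activation_succ_iff_of_tau_eq_degree hu).2)

lemma isTargetSet_iff_forall_eventually :
    IsTargetSet G τ X ↔ ∀ v, ∀ᶠ t in atTop, v ∈ activation G τ X t := by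
  rw [IsTargetSet, ← eventually_atTop, ← eventually_all]
  simp only [eq_univ_iff_forall]

lemma notMem_activation_of_alternating {A B : Set V}
    (hA₁ : ∀ u ∈ A, τ u = 1) (hB₁ : ∀ u ∈ B, τ u = 1)
    (hA : ∀ u ∈ A, ∀ v, G.Adj u v → v ∈ B ∨ τ v = G.degree v)
    (hB : ∀ u ∈ B, ∀ v, G.Adj u v → v ∈ A ∨ τ v = G.degree v)
    (hXA : ∀ x ∈ X, x ∉ A) (hXB : ∀ x ∈ X, ∀ u ∈ B, ¬ G.Adj u x) (t : ℕ) :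
    (∀ u ∈ A, u ∉ activation G τ X (2 * t)) ∧ ∀ u ∈ B, u ∉ activation G τ X (2 * t + 1) := by
  induction t with
  | zero =>
    refine ⟨fun u hu hu₀ => hXA u hu₀ hu, fun u hu hu₁ => ?_⟩
    obtain ⟨v, huv, hv⟩ := (mem_activation_succ_iff_of_tau_eq_one (hB₁ u hu)).1 hu₁
    exact hXB v hv u hu huv
  | succ t ih =>
    have hback : ∀ {u v s}, τ v = G.degree v → G.Adj u v →
        v ∈ activation G τ X (s + 1) → u ∈ activation G τ X s := fun hv huv hvs =>
      (mem_activation_succ_iff_of_tau_eq_degree hv).1 hvs ((G.mem_neighborFinset _ _).2 huv.symm)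
    have heven : ∀ u ∈ A, u ∉ activation G τ X (2 * t + 1 + 1) := fun u hu hut => by
      obtain ⟨v, huv, hv⟩ := (mem_activation_succ_iff_of_tau_eq_one (hA₁ u hu)).1 hut
      rcases hA u hu v huv with hvB | hvdeg
      exacts [ih.2 v hvB hv, ih.1 u hu (hback hvdeg huv hv)]
    refine ⟨heven, fun u hu hut => ?_⟩
    obtain ⟨v, huv, hv⟩ := (mem_activation_succ_iff_of_tau_eq_one (hB₁ u hu)).1 hut
    rcases hB u hu v huv with hvA | hvdeg
    exacts [heven v hvA hv, ih.2 u hu (hback hvdeg huv hv)]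

lemma mem_activation_of_mem_add_two (hu : τ u = 1) (hnb : ∀ v, G.Adj u v → τ v = G.degree v)
    (h : u ∈ activation G τ X (t + 2)) : u ∈ activation G τ X t := by
  obtain ⟨v, huv, hv⟩ := (mem_activation_succ_iff_of_tau_eq_one hu).1 h
  exact (mem_activation_succ_iff_of_tau_eq_degree (hnb v huv)).1 hv
    ((G.mem_neighborFinset v u).2 huv.symm)

lemma exists_adj_mem_and_neighborFinset_subset_of_eventually (hu : τ u = 1)
    (hnb : ∀ v, G.Adj u v → τ v = G.degree v) (h : ∀ᶠ t in atTop, u ∈ activation G τ X t) :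
    ∃ v₁ v₂ : V, G.Adj u v₁ ∧ G.Adj u v₂ ∧ v₁ ∈ X ∧ G.neighborFinset v₂ ⊆ X := by
  have hback : ∀ k t, u ∈ activation G τ X (t + 2 * k) → u ∈ activation G τ X t := by
    intro k
    induction k with
    | zero => exact fun _ => id
    | succ k ih => exact fun t ht => ih t (mem_activation_of_mem_add_two hu hnb ht)
  obtain ⟨t₀, ht₀⟩ := eventually_atTop.1 h
  obtain ⟨v₁, huv₁, hv₁⟩ :=
    (mem_activation_succ_iff_of_tau_eq_one hu).1 (hback t₀ 1 (ht₀ _ (by omega)))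
  obtain ⟨v₂, huv₂, hv₂⟩ :=
    (mem_activation_succ_iff_of_tau_eq_one hu).1 (hback t₀ 2 (ht₀ _ (by omega)))
  exact ⟨v₁, v₂, huv₁, huv₂, hv₁,
    (mem_activation_succ_iff_of_tau_eq_degree (hnb v₂ huv₂)).1 hv₂⟩

end Activation

section Graph

variable {V : Type*} {G : SimpleGraph V}

lemma restrict_eq_induce (S : Set V) : restrict G S = G.induce S := by
  ext; rfl

lemma IsComponentOf.subset {S U : Set V} (hU : IsComponentOf G S U) : U ⊆ S := hU.1

lemma IsComponentOf.nonempty {S U : Set V} (hU : IsComponentOf G S U) : U.Nonempty := hU.2.1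

lemma IsComponentOf.connected {S U : Set V} (hU : IsComponentOf G S U) :
    (G.induce U).Connected := hU.2.2.1

lemma IsComponentOf.mem_of_adj {S U : Set V} (hU : IsComponentOf G S U) {u v : V} (hu : u ∈ U)
    (hv : v ∈ S) (huv : G.Adj u v) : v ∈ U := hU.2.2.2 u hu v hv huv

lemma exists_adj_of_connected_induce {U : Finset V} {u : V} (hconn : (G.induce ↑U).Preconnected)
    (hcard : 2 ≤ #U) (hu : u ∈ U) : ∃ w ∈ U, G.Adj u w := by
  have : Nontrivial (↑U : Set V) := Set.nontrivial_coe_sort.2 (one_lt_card_iff_nontrivial.1 hcard)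
  obtain ⟨w, huw⟩ := hconn.exists_adj_of_nontrivial ⟨u, hu⟩
  exact ⟨w, w.2, huw⟩

lemma IsComponentOf.exists_finset [Finite V] {S : Set V} {v : V} (hv : v ∈ S) :
    ∃ U : Finset V, IsComponentOf G S ↑U ∧ v ∈ U := by
  classical
  obtain ⟨U, ⟨hvU, hUS, hUconn⟩, hmax⟩ := Set.Finite.exists_maximal
    (s := {U : Finset V | v ∈ U ∧ ↑U ⊆ S ∧ (G.induce ↑U).Connected}) (Set.toFinite _)
    ⟨{v}, by simp, by simp [hv], by
      rw [coe_singleton, induce_singleton_eq_top]; exact connected_top⟩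
  refine ⟨U, ⟨hUS, ⟨v, hvU⟩, hUconn, fun u hu w hw huw => ?_⟩, hvU⟩
  have hconn : (G.induce ↑(insert w U)).Connected := by
    rw [coe_insert, Set.insert_eq, Set.union_comm]
    exact G.connected_induce_union hUconn.preconnected .of_subsingleton hu rfl huw
  exact hmax ⟨mem_insert_of_mem hvU, by simp [Set.insert_subset_iff, hw, hUS], hconn⟩
    (subset_insert _ _) (mem_insert_self _ _)

lemma exists_bipartition_of_colorable [DecidableEq V] {U : Finset V}
    (hcol : (G.induce ↑U).Colorable 2) :
    ∃ A B : Finset V, A ∪ B = U ∧ Disjoint A B ∧ (∀ a ∈ A, ∀ a' ∈ A, ¬ G.Adj a a') ∧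
      (∀ b ∈ B, ∀ b' ∈ B, ¬ G.Adj b b') := by
  let c : (G.induce ↑U).Coloring Bool := hcol.toColoring (by simp)
  let f : V → Bool := fun w => if h : w ∈ U then c ⟨w, h⟩ else false
  have hf : ∀ a ∈ U, ∀ a' ∈ U, G.Adj a a' → f a ≠ f a' := fun a ha a' ha' h => by
    simpa [f, ha, ha'] using c.valid (v := ⟨a, ha⟩) (w := ⟨a', ha'⟩) h
  refine ⟨U.filter (f ·), U.filter (¬ f ·), filter_union_filter_not_eq _ _,
    disjoint_filter_filter_not _ _ _, ?_, ?_⟩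
  · intro a ha a' ha' h
    simp only [mem_filter] at ha ha'
    exact hf a ha.1 a' ha'.1 h (ha.2.trans ha'.2.symm)
  · intro a ha a' ha' h
    simp only [mem_filter, Bool.not_eq_true] at ha ha'
    exact hf a ha.1 a' ha'.1 h (ha.2.trans ha'.2.symm)

lemma odd_length_of_bipartition [DecidableEq V] {U A B : Finset V} (hAB : A ∪ B = U)
    (hdisj : Disjoint A B) (hA : ∀ a ∈ A, ∀ a' ∈ A, ¬ G.Adj a a')
    (hB : ∀ b ∈ B, ∀ b' ∈ B, ¬ G.Adj b b') {a b : (↑U : Set V)} (p : (G.induce ↑U).Walk a b)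
    (ha : ↑a ∈ A) (hb : ↑b ∈ B) : Odd p.length := by
  let c : (G.induce ↑U).Coloring Bool :=
    Coloring.mk (fun w => decide (↑w ∈ A)) fun {w w'} h heq => by
      have hw : ↑w ∈ A ∪ B := hAB ▸ w.2
      have hw' : ↑w' ∈ A ∪ B := hAB ▸ w'.2
      rw [mem_union] at hw hw'
      by_cases hwA : ↑w ∈ A
      · exact hA _ hwA _ (by simpa [hwA] using heq) h
      · exact hB _ (hw.resolve_left hwA) _ (hw'.resolve_left (by simpa [hwA] using heq)) h
  have hc : ∀ w, c w = decide (↑w ∈ A) := fun _ => rfl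
  rw [c.odd_length_iff_not_congr, hc, hc]
  simp [ha, disjoint_right.1 hdisj hb]

lemma exists_adj_of_mem_union_openNbhd [DecidableEq V] {U A B : Finset V} {x : V}
    (hconn : (G.induce ↑U).Preconnected) (hcard : 2 ≤ #U) (hAB : A ∪ B = U)
    (hA : ∀ a ∈ A, ∀ a' ∈ A, ¬ G.Adj a a')
    (hx : x ∈ (↑A : Set V) ∪ (openNbhd G ↑B \ closedNbhd G ↑A) ∪ (openNbhd G ↑A ∩ openNbhd G ↑B)) :
    ∃ b ∈ B, G.Adj b x := by
  rcases hx with (hxA | ⟨⟨-, b, hb, hbx⟩, -⟩) | ⟨-, -, b, hb, hbx⟩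
  · obtain ⟨w, hw, hxw⟩ := exists_adj_of_connected_induce hconn hcard (hAB ▸ mem_union_left _ hxA)
    rw [← hAB, mem_union] at hw
    exact ⟨w, hw.resolve_left fun hwA => hA x hxA w hwA hxw, hxw.symm⟩
  all_goals exact ⟨b, hb, hbx⟩

end Graph

structure IsAdmissibleThreshold {V : Type*} [Fintype V] (G : SimpleGraph V) [DecidableRel G.Adj]
    (τ : V → ℤ) : Prop where
  tau_eq : ∀ u, τ u = 0 ∨ τ u = 1 ∨ τ u = G.degree u
  not_adj : ∀ u v, G.Adj u v → ¬ (τ u = G.degree u ∧ τ v = G.degree v)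

namespace IsAdmissibleThreshold

variable {V : Type*} [Fintype V] {G : SimpleGraph V} [DecidableRel G.Adj] {τ : V → ℤ} {u v : V}

lemma tau_low_of_adj (hτ : IsAdmissibleThreshold G τ) (hv : τ v = G.degree v) (hvu : G.Adj v u) :
    τ u = 0 ∨ τ u = 1 := by
  rcases hτ.tau_eq u with h | h | h
  exacts [.inl h, .inr h, (hτ.not_adj v u hvu ⟨hv, h⟩).elim]

lemma mem_or_tau_eq_degree {U : Set V} (hτ : IsAdmissibleThreshold G τ)
    (hU : IsComponentOf G {u | τ u = 0 ∨ τ u = 1} U) (hu : u ∈ U) (huv : G.Adj u v) :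
    v ∈ U ∨ τ v = G.degree v := by
  rcases hτ.tau_eq v with h | h | h
  exacts [.inl (hU.mem_of_adj hu (.inl h) huv), .inl (hU.mem_of_adj hu (.inr h) huv), .inr h]

variable [DecidableEq V] {X : Finset V} {t : ℕ}

lemma mem_activation_add_two_of_tau_eq_degree (hτ : IsAdmissibleThreshold G τ)
    (hv : τ v = G.degree v) (hvt : v ∈ activation G τ X t) : v ∈ activation G τ X (t + 2) :=
  (mem_activation_succ_iff_of_tau_eq_degree hv).2 fun w hw =>
    have hvw := (G.mem_neighborFinset v w).1 hw
    mem_activation_succ_of_adj (hτ.tau_low_of_adj hv hvw) hvw.symm hvt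

lemma activation_succ_subset_add_three (hτ : IsAdmissibleThreshold G τ) (t : ℕ) :
    activation G τ X (t + 1) ⊆ activation G τ X (t + 3) := by
  intro u hu
  rcases hτ.tau_eq u with h0 | h1 | hdeg
  · exact mem_activation_succ_of_tau_eq_zero h0
  · obtain ⟨v, huv, hv⟩ := (mem_activation_succ_iff_of_tau_eq_one h1).1 hu
    have hv' : v ∈ activation G τ X (t + 2) := by
      rcases hτ.tau_eq v with hv0 | hv1 | hvdeg
      · exact mem_activation_succ_of_tau_eq_zero hv0
      · exact mem_activation_succ_of_adj (.inr hv1) huv.symm hu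
      · exact hτ.mem_activation_add_two_of_tau_eq_degree hvdeg hv
    exact (mem_activation_succ_iff_of_tau_eq_one h1).2 ⟨v, huv, hv'⟩
  · exact hτ.mem_activation_add_two_of_tau_eq_degree hdeg hu

lemma eventually_mem_activation (hτ : IsAdmissibleThreshold G τ) {a b : ℕ}
    (ha : v ∈ activation G τ X (a + 1)) (hb : v ∈ activation G τ X (b + 1)) (hab : Odd (a + b)) :
    ∀ᶠ t in atTop, v ∈ activation G τ X t :=
  Nat.eventually_atTop_of_succ <| Nat.eventually_atTop_of_add_two
    (P := fun n => v ∈ activation G τ X (n + 1)) (fun n hn => hτ.activation_succ_subset_add_three n hn)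
    ha hb hab


lemma inter_closedNbhdFinset_nonempty_of_eventually (hτ : IsAdmissibleThreshold G τ)
    {U : Finset V} (hU : IsComponentOf G {u | τ u = 0 ∨ τ u = 1} ↑U) (hone : ∀ u ∈ U, τ u = 1)
    (h : ∀ v, ∀ᶠ t in atTop, v ∈ activation G τ X t) : (X ∩ closedNbhdFinset G U).Nonempty := by
  by_contra hX
  rw [not_nonempty_iff_eq_empty, ← disjoint_iff_inter_eq_empty] at hX
  obtain ⟨u, hu⟩ := hU.nonempty
  obtain ⟨t₀, ht₀⟩ := eventually_atTop.1 (h u)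
  have hnbr : ∀ w ∈ (↑U : Set V), ∀ v, G.Adj w v → v ∈ (↑U : Set V) ∨ τ v = G.degree v :=
    fun w hw v hwv => hτ.mem_or_tau_eq_degree hU hw hwv
  refine (notMem_activation_of_alternating hone hone hnbr hnbr
    (fun x hx hxU => disjoint_left.1 hX hx (mem_union_left _ hxU))
    (fun x hx w hw hwx => disjoint_left.1 hX hx (mem_union_right _ (mem_filter.2
      ⟨mem_univ _, w, hw, hwx⟩))) t₀).1 u hu (ht₀ _ (by omega))

lemma exists_mem_union_openNbhd_of_eventually (hτ : IsAdmissibleThreshold G τ)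
    {U A B : Finset V} (hU : IsComponentOf G {u | τ u = 0 ∨ τ u = 1} ↑U) (hcard : 2 ≤ #U)
    (hone : ∀ u ∈ U, τ u = 1) (hAB : A ∪ B = U)
    (hA : ∀ a ∈ A, ∀ a' ∈ A, ¬ G.Adj a a') (hB : ∀ b ∈ B, ∀ b' ∈ B, ¬ G.Adj b b')
    (h : ∀ v, ∀ᶠ t in atTop, v ∈ activation G τ X t) :
    ∃ x ∈ X, x ∈ (↑A : Set V) ∪ (openNbhd G ↑B \ closedNbhd G ↑A) ∪
      (openNbhd G ↑A ∩ openNbhd G ↑B) := by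
  by_contra! hX
  have hAU : A ⊆ U := hAB ▸ subset_union_left
  have hBU : B ⊆ U := hAB ▸ subset_union_right
  have hside : ∀ w ∈ U, w ∉ A → w ∈ B := fun w hw hwA => by
    rw [← hAB, mem_union] at hw; exact hw.resolve_left hwA
  obtain ⟨a, haA⟩ : A.Nonempty := by
    obtain ⟨u, hu⟩ := hU.nonempty
    obtain ⟨w, hw, huw⟩ := exists_adj_of_connected_induce hU.connected.preconnected hcard hu
    by_contra! hAe
    exact hB u (hside u hu (by simp [hAe])) w (hside w hw (by simp [hAe])) huw
  obtain ⟨t₀, ht₀⟩ := eventually_atTop.1 (h a)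
  refine (notMem_activation_of_alternating (A := ↑A) (B := ↑B)
    (fun u hu => hone u (hAU hu)) (fun u hu => hone u (hBU hu))
    (fun u hu v huv => (hτ.mem_or_tau_eq_degree hU (hAU hu) huv).imp_left
      fun hvU => hside v hvU fun hvA => hA u hu v hvA huv)
    (fun u hu v huv => (hτ.mem_or_tau_eq_degree hU (hBU hu) huv).imp_left
      fun hvU => by_contra fun hvA => hB u hu v (hside v hvU hvA) huv)
    (fun x hx hxA => hX x hx (.inl (.inl hxA))) (fun x hx b hb hbx => ?_) t₀).1 a haA
    (ht₀ _ (by omega))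
  have hxB : x ∈ openNbhd G ↑B := ⟨fun hxB => hB b hb x hxB hbx, b, hb, hbx⟩
  by_cases hxA : x ∈ openNbhd G ↑A
  · exact hX x hx (.inr ⟨hxA, hxB⟩)
  · refine hX x hx (.inl (.inr ⟨hxB, ?_⟩))
    rintro (hxA' | hxA')
    exacts [hX x hx (.inl (.inl hxA')), hxA hxA']

lemma eventually_mem_activation_of_odd_walk (hτ : IsAdmissibleThreshold G τ) {S : Set V}
    (hS : ∀ w ∈ S, τ w = 0 ∨ τ w = 1) (hconn : (G.induce S).Preconnected) {x y : S}
    (p : (G.induce S).Walk x y) {r s : ℕ} (hx : ↑x ∈ activation G τ X (r + 1))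
    (hy : ↑y ∈ activation G τ X (s + 1)) (hodd : Odd (r + p.length + s)) :
    ∀ u ∈ S, ∀ᶠ t in atTop, u ∈ activation G τ X t := by
  have hy' : ↑y ∈ activation G τ X (r + p.length + 1) := by
    simpa only [add_right_comm] using mem_activation_add_length hS p hx
  exact fun u hu => eventually_mem_activation_of_reachable hS (hconn y ⟨u, hu⟩)
    (hτ.eventually_mem_activation hy' hy hodd)

lemma eventually_mem_activation_of_not_colorable (hτ : IsAdmissibleThreshold G τ)
    {U : Finset V} (hone : ∀ u ∈ U, τ u = 1) (hconn : (G.induce ↑U).Connected) (hcard : 2 ≤ #U)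
    (hcol : ¬ (G.induce ↑U).Colorable 2) (hX : (X ∩ closedNbhdFinset G U).Nonempty) :
    ∀ u ∈ U, ∀ᶠ t in atTop, u ∈ activation G τ X t := by
  obtain ⟨x, hx⟩ := hX
  obtain ⟨hxX, hxN⟩ := mem_inter.1 hx
  obtain ⟨u₀, hu₀, hu₀x⟩ : ∃ u₀ ∈ U, G.Adj u₀ x := by
    rcases mem_union.1 hxN with hxU | hxN
    · obtain ⟨w, hw, hxw⟩ := exists_adj_of_connected_induce hconn.preconnected hcard hxU
      exact ⟨w, hw, hxw.symm⟩
    · simpa using hxN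
  have hlow : ∀ w ∈ (↑U : Set V), τ w = 0 ∨ τ w = 1 := fun w hw => .inr (hone w hw)
  have hloop : ∃ z, ∃ c : (G.induce ↑U).Walk z z, Odd c.length := by
    simpa [two_colorable_iff_forall_loop_even] using hcol
  obtain ⟨z, c, hc⟩ := hloop
  obtain ⟨p⟩ := hconn.preconnected ⟨u₀, hu₀⟩ z
  have hz : ↑z ∈ activation G τ X (p.length + 1) := by
    simpa [add_comm] using mem_activation_add_length hlow p
      ((mem_activation_succ_iff_of_tau_eq_one (t := 0) (hone u₀ hu₀)).2 ⟨x, hu₀x, hxX⟩)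
  obtain ⟨k, hk⟩ := hc
  exact hτ.eventually_mem_activation_of_odd_walk hlow hconn.preconnected c hz hz
    ⟨k + p.length, by omega⟩

lemma eventually_mem_activation_of_bipartition (hτ : IsAdmissibleThreshold G τ)
    {U A B : Finset V} (hone : ∀ u ∈ U, τ u = 1) (hconn : (G.induce ↑U).Connected)
    (hcard : 2 ≤ #U) (hAB : A ∪ B = U) (hdisj : Disjoint A B)
    (hA : ∀ a ∈ A, ∀ a' ∈ A, ¬ G.Adj a a') (hB : ∀ b ∈ B, ∀ b' ∈ B, ¬ G.Adj b b')
    (hx : ∃ x ∈ X, x ∈ (↑A : Set V) ∪ (openNbhd G ↑B \ closedNbhd G ↑A) ∪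
      (openNbhd G ↑A ∩ openNbhd G ↑B))
    (hy : ∃ y ∈ X, y ∈ (↑B : Set V) ∪ (openNbhd G ↑A \ closedNbhd G ↑B) ∪
      (openNbhd G ↑A ∩ openNbhd G ↑B)) :
    ∀ u ∈ U, ∀ᶠ t in atTop, u ∈ activation G τ X t := by
  obtain ⟨x, hxX, hx⟩ := hx
  obtain ⟨y, hyX, hy⟩ := hy
  obtain ⟨b, hb, hbx⟩ := exists_adj_of_mem_union_openNbhd hconn.preconnected hcard hAB hA hx
  obtain ⟨a, ha, hay⟩ := exists_adj_of_mem_union_openNbhd hconn.preconnected hcard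
    ((union_comm B A).trans hAB) hB (by rwa [Set.inter_comm] at hy)
  have hUA : a ∈ U := hAB ▸ mem_union_left _ ha
  have hUB : b ∈ U := hAB ▸ mem_union_right _ hb
  obtain ⟨p⟩ := hconn.preconnected ⟨a, hUA⟩ ⟨b, hUB⟩
  exact hτ.eventually_mem_activation_of_odd_walk (fun w hw => .inr (hone w hw))
    hconn.preconnected p (r := 0) (s := 0)
    ((mem_activation_succ_iff_of_tau_eq_one (hone a hUA)).2 ⟨y, hay, hyX⟩)
    ((mem_activation_succ_iff_of_tau_eq_one (hone b hUB)).2 ⟨x, hbx, hxX⟩)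
    (by simpa using odd_length_of_bipartition hAB hdisj hA hB p ha hb)

lemma eventually_mem_activation_of_forall_adj (hτ : IsAdmissibleThreshold G τ) {u : V}
    (hu : τ u = 1) (hnb : ∀ v, G.Adj u v → τ v = G.degree v)
    (h : ∃ v₁ v₂ : V, G.Adj u v₁ ∧ G.Adj u v₂ ∧ v₁ ∈ X ∧ G.neighborFinset v₂ ⊆ X) :
    ∀ᶠ t in atTop, u ∈ activation G τ X t := by
  obtain ⟨v₁, v₂, huv₁, huv₂, hv₁, hv₂⟩ := h
  refine hτ.eventually_mem_activation (a := 0) (b := 1) ?_ ?_ (by decide)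
  · exact (mem_activation_succ_iff_of_tau_eq_one hu).2 ⟨v₁, huv₁, hv₁⟩
  · exact (mem_activation_succ_iff_of_tau_eq_one hu).2
      ⟨v₂, huv₂, (mem_activation_succ_iff_of_tau_eq_degree (hnb v₂ huv₂)).2 hv₂⟩

lemma eventually_mem_activation_of_isComponentOf (hτ : IsAdmissibleThreshold G τ)
    {U : Finset V} (hU : IsComponentOf G {u | τ u = 0 ∨ τ u = 1} ↑U)
    (h₁ : 2 ≤ #U → (∀ u ∈ U, τ u = 1) →
      (¬ (restrict G (↑U : Set V)).Colorable 2 → (X ∩ closedNbhdFinset G U).Nonempty) ∧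
      (∀ A B : Finset V, A ∪ B = U → Disjoint A B →
        (∀ a ∈ A, ∀ a' ∈ A, ¬ G.Adj a a') → (∀ b ∈ B, ∀ b' ∈ B, ¬ G.Adj b b') →
        (∃ x ∈ X, x ∈ (↑A : Set V) ∪ (openNbhd G ↑B \ closedNbhd G ↑A) ∪
            (openNbhd G ↑A ∩ openNbhd G ↑B)) ∧
        (∃ x ∈ X, x ∈ (↑B : Set V) ∪ (openNbhd G ↑A \ closedNbhd G ↑B) ∪
            (openNbhd G ↑A ∩ openNbhd G ↑B))))
    (h₂ : ∀ u : V, τ u = 1 → (∀ v, G.Adj u v → τ v = G.degree v) →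
      ∃ v₁ v₂ : V, G.Adj u v₁ ∧ G.Adj u v₂ ∧ v₁ ∈ X ∧ G.neighborFinset v₂ ⊆ X) :
    ∀ u ∈ U, ∀ᶠ t in atTop, u ∈ activation G τ X t := by
  have hlow : ∀ w ∈ (↑U : Set V), τ w = 0 ∨ τ w = 1 := fun w hw => hU.subset hw
  by_cases hzero : ∃ w ∈ U, τ w = 0
  · obtain ⟨w, hw, hw₀⟩ := hzero
    exact fun u hu => eventually_mem_activation_of_reachable hlow
      (hU.connected.preconnected ⟨w, hw⟩ ⟨u, hu⟩) (eventually_mem_activation_of_tau_eq_zero hw₀)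
  have hone : ∀ u ∈ U, τ u = 1 := fun u hu => (hlow u hu).resolve_left fun h => hzero ⟨u, hu, h⟩
  obtain hcard | hcard := le_or_gt 2 #U
  · obtain ⟨hnb, hb⟩ := h₁ hcard hone
    rw [restrict_eq_induce] at hnb
    by_cases hcol : (G.induce ↑U).Colorable 2
    · obtain ⟨A, B, hAB, hdisj, hA, hB⟩ := exists_bipartition_of_colorable hcol
      obtain ⟨hx, hy⟩ := hb A B hAB hdisj hA hB
      exact hτ.eventually_mem_activation_of_bipartition hone hU.connected hcard hAB hdisj hA hB
        hx hy
    · exact hτ.eventually_mem_activation_of_not_colorable hone hU.connected hcard hcol (hnb hcol)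
  · intro u hu
    have hnb : ∀ v, G.Adj u v → τ v = G.degree v := fun v huv =>
      (hτ.mem_or_tau_eq_degree hU hu huv).resolve_left fun hv =>
        hcard.not_ge (one_lt_card.2 ⟨u, hu, v, hv, huv.ne⟩)
    exact hτ.eventually_mem_activation_of_forall_adj (hone u hu) hnb (h₂ u (hone u hu) hnb)

end IsAdmissibleThreshold

theorem stmt_17 {V : Type*} [Fintype V] [DecidableEq V] (G : SimpleGraph V)
    [DecidableRel G.Adj] (τ : V → ℤ)
    (hτ : ∀ u, τ u = 0 ∨ τ u = 1 ∨ τ u = (G.degree u : ℤ))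
    (hedge : ∀ u v, G.Adj u v →
      ¬ (τ u = (G.degree u : ℤ) ∧ τ v = (G.degree v : ℤ)))
    (X : Finset V) :
    IsTargetSet G τ X ↔
      ((∀ U : Finset V, IsComponentOf G {u | τ u = 0 ∨ τ u = 1} ↑U → 2 ≤ U.card →
          (∀ u ∈ U, τ u = 1) →
          (¬ (restrict G (↑U : Set V)).Colorable 2 → (X ∩ closedNbhdFinset G U).Nonempty) ∧
          (∀ A B : Finset V, A ∪ B = U → Disjoint A B →
            (∀ a ∈ A, ∀ a' ∈ A, ¬ G.Adj a a') → (∀ b ∈ B, ∀ b' ∈ B, ¬ G.Adj b b') →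
            (∃ x ∈ X, x ∈ (↑A : Set V) ∪ (openNbhd G ↑B \ closedNbhd G ↑A) ∪
                (openNbhd G ↑A ∩ openNbhd G ↑B)) ∧
            (∃ x ∈ X, x ∈ (↑B : Set V) ∪ (openNbhd G ↑A \ closedNbhd G ↑B) ∪
                (openNbhd G ↑A ∩ openNbhd G ↑B)))) ∧
        (∀ u : V, τ u = 1 → (∀ v, G.Adj u v → τ v = (G.degree v : ℤ)) →
          ∃ v₁ v₂ : V, G.Adj u v₁ ∧ G.Adj u v₂ ∧ v₁ ∈ X ∧ G.neighborFinset v₂ ⊆ X)) := by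
  have hτ' : IsAdmissibleThreshold G τ := ⟨hτ, hedge⟩
  rw [isTargetSet_iff_forall_eventually]
  constructor
  · intro h
    refine ⟨fun U hU hcard hone =>
      ⟨fun _ => hτ'.inter_closedNbhdFinset_nonempty_of_eventually hU hone h,
        fun A B hAB _ hA hB =>
          ⟨hτ'.exists_mem_union_openNbhd_of_eventually hU hcard hone hAB hA hB h, ?_⟩⟩,
      fun u hu hnb => exists_adj_mem_and_neighborFinset_subset_of_eventually hu hnb (h u)⟩
    simpa only [Set.inter_comm] using
      hτ'.exists_mem_union_openNbhd_of_eventually hU hcard hone ((union_comm B A).trans hAB) hB hA h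
  · rintro ⟨h₁, h₂⟩
    have hlow : ∀ v, τ v = 0 ∨ τ v = 1 → ∀ᶠ t in atTop, v ∈ activation G τ X t := fun v hv => by
      obtain ⟨U, hU, hvU⟩ := IsComponentOf.exists_finset (G := G) (S := {u | τ u = 0 ∨ τ u = 1}) hv
      exact hτ'.eventually_mem_activation_of_isComponentOf hU (h₁ U hU) h₂ v hvU
    intro v
    rcases hτ v with hv | hv | hv
    · exact hlow v (.inl hv)
    · exact hlow v (.inr hv)
    · exact eventually_mem_activation_of_tau_eq_degree hv fun w hw =>
        hlow w (hτ'.tau_low_of_adj hv ((G.mem_neighborFinset v w).1 hw))
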